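/- arXiv:1202.3213 — 3 statements merged into one kernel-verified Lean document; each statement's English description precedes it below -/
import Mathlib

section
/- Let ζ = e^{2πi/5} and Z₀ = [[ζ, ζ+ζ³],[ζ², ζ²+ζ]]⁻¹ · [[ζ², ζ⁴],[ζ⁴, ζ³]]. Then Z₀ belongs to the Siegel upper half-space 𝔥₂, i.e. Z₀ is a symmetric 2×2 complex matrix whose imaginary part is positive definite. -/
open Matrix Complex

noncomputable section

/-- `e z = exp(2πiz)` -/
def e (z : ℂ) : ℂ := Complex.exp (2 * Real.pi * Complex.I * z)

/-- The Siegel upper half-space: symmetric complex matrices with positive definite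
imaginary part. -/
def SiegelHalfSpace (g : ℕ) : Set (Matrix (Fin g) (Fin g) ℂ) :=
  {Z | Z.IsSymm ∧ (Matrix.of fun i j => (Z i j).im).PosDef}

/-- The theta function `Θ(u, Z; r, s)`. -/
def Theta {g : ℕ} (u : Fin g → ℂ) (Z : Matrix (Fin g) (Fin g) ℂ)
    (r s : Fin g → ℝ) : ℂ :=
  ∑' x : Fin g → ℤ,
    e ((fun i => (x i : ℂ) + (r i : ℂ)) ⬝ᵥ Z.mulVec (fun i => (x i : ℂ) + (r i : ℂ)) / 2
      + (fun i => (x i : ℂ) + (r i : ℂ)) ⬝ᵥ (u + fun i => (s i : ℂ)))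

/-- The theta constant `Φ_{[r;s]}(Z)`. -/
def PhiTheta {g : ℕ} (r s : Fin g → ℝ) (Z : Matrix (Fin g) (Fin g) ℂ) : ℂ :=
  Theta 0 Z r s / Theta 0 Z 0 0

/-- The standard symplectic matrix `J`. -/
def Jmat (g : ℕ) : Matrix (Fin g ⊕ Fin g) (Fin g ⊕ Fin g) ℤ :=
  Matrix.fromBlocks 0 (-1) 1 0

/-- Membership in `Sp_{2g}(ℤ)`. -/
def IsSymplectic {g : ℕ} (γ : Matrix (Fin g ⊕ Fin g) (Fin g ⊕ Fin g) ℤ) : Prop :=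
  γᵀ * Jmat g * γ = Jmat g

/-- `ζ = e^{2πi/5}`. -/
def zeta5 : ℂ := Complex.exp (2 * Real.pi * Complex.I / 5)

/-- The CM point `Z₀` attached to `ℚ(ζ₅)`. -/
def Zcm : Matrix (Fin 2) (Fin 2) ℂ :=
  (!![zeta5, zeta5 + zeta5 ^ 3; zeta5 ^ 2, zeta5 ^ 2 + zeta5])⁻¹ *
    !![zeta5 ^ 2, zeta5 ^ 4; zeta5 ^ 4, zeta5 ^ 3]

/-! Using `1 + ζ + ζ² + ζ³ + ζ⁴ = 0` one finds `Z₀ = [[ζ² - ζ³, -1 - ζ²], [-1 - ζ², -ζ⁴]]`,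
which is visibly symmetric. As `ζ³ = conj ζ²` and `ζ⁴ = conj ζ`, its imaginary part is
`[[2 Im ζ², -Im ζ²], [-Im ζ², Im ζ]]`; with `Im ζ² = 2 cos(2π/5) Im ζ` its determinant is
`4 cos(2π/5) (1 - cos(2π/5)) (Im ζ)² > 0`. -/

lemma Matrix.posDef_fin_two_of {R : Type*} [CommRing R] [LinearOrder R] [IsStrictOrderedRing R]
    [StarRing R] [TrivialStar R] {a b c : R} (ha : 0 < a) (hdet : 0 < a * c - b ^ 2) :
    (!![a, b; b, c]).PosDef := by
  refine Matrix.PosDef.of_dotProduct_mulVec_pos ?_ fun x hx => ?_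
  · ext i j
    fin_cases i <;> fin_cases j <;> simp
  · have hx' : x 0 ≠ 0 ∨ x 1 ≠ 0 := by
      by_contra! h
      exact hx (funext fun i => by fin_cases i <;> simp [h.1, h.2])
    simp only [dotProduct, mulVec, Fin.sum_univ_two, star_trivial, of_apply, cons_val',
      cons_val_zero, cons_val_one, empty_val', cons_val_fin_one]
    have hsq : a * (x 0 * (a * x 0 + b * x 1) + x 1 * (b * x 0 + c * x 1))
        = (a * x 0 + b * x 1) ^ 2 + (a * c - b ^ 2) * x 1 ^ 2 := by ring
    refine pos_of_mul_pos_right (hsq ▸ ?_) ha.le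
    rcases eq_or_ne (x 1) 0 with h1 | h1
    · have h0 : x 0 ≠ 0 := hx'.resolve_right (not_not.mpr h1)
      simp only [h1, mul_zero, add_zero, zero_pow two_ne_zero]
      positivity
    · positivity

theorem inv_mul_eq_of_isPrimitiveRoot_five {K : Type*} [Field K] {ζ : K}
    (hζ : IsPrimitiveRoot ζ 5) :
    (!![ζ, ζ + ζ ^ 3; ζ ^ 2, ζ ^ 2 + ζ])⁻¹ * !![ζ ^ 2, ζ ^ 4; ζ ^ 4, ζ ^ 3]
      = !![ζ ^ 2 - ζ ^ 3, -1 - ζ ^ 2; -1 - ζ ^ 2, -ζ ^ 4] := by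
  have h5 : ζ ^ 5 = 1 := hζ.pow_eq_one
  have hsum : 1 + ζ + ζ ^ 2 + ζ ^ 3 + ζ ^ 4 = 0 := by
    simpa [Finset.sum_range_succ] using hζ.geom_sum_eq_zero (by norm_num)
  set A := !![ζ, ζ + ζ ^ 3; ζ ^ 2, ζ ^ 2 + ζ]
  have hdet : A.det = ζ ^ 2 - 1 := by
    rw [Matrix.det_fin_two_of]; linear_combination -h5
  have hunit : IsUnit A.det :=
    hdet ▸ (sub_ne_zero.mpr (hζ.pow_ne_one_of_pos_of_lt two_ne_zero (by norm_num))).isUnit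
  have hmul : A * !![ζ ^ 2 - ζ ^ 3, -1 - ζ ^ 2; -1 - ζ ^ 2, -ζ ^ 4]
      = !![ζ ^ 2, ζ ^ 4; ζ ^ 4, ζ ^ 3] := by
    rw [Matrix.mul_fin_two]
    ext i j
    fin_cases i <;> fin_cases j <;> simp
    · linear_combination -hsum - h5
    · linear_combination -hsum - (1 + ζ ^ 2) * h5
    · linear_combination -hsum - h5
    · linear_combination -hsum - (1 + ζ) * h5
  rw [← hmul]
  exact Matrix.nonsing_inv_mul_cancel_left A _ hunit

theorem Complex.im_pow_sub_eq_neg {ζ : ℂ} {n k : ℕ} (h : ζ ^ n = 1) (hk : k ≤ n) :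
    (ζ ^ (n - k)).im = -(ζ ^ k).im := by
  rcases eq_or_ne n 0 with rfl | hn
  · simp [Nat.le_zero.mp hk]
  have hnorm : ‖ζ ^ k‖ = 1 := by rw [norm_pow, norm_eq_one_of_pow_eq_one h hn, one_pow]
  have hinv : ζ ^ (n - k) = (ζ ^ k)⁻¹ :=
    eq_inv_of_mul_eq_one_left (by rw [← pow_add, Nat.sub_add_cancel hk, h])
  rw [hinv, inv_eq_conj hnorm, conj_im]

theorem posDef_of_norm_eq_one_of_re_pos_of_im_pos {z : ℂ} (hz : ‖z‖ = 1) (hre : 0 < z.re)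
    (him : 0 < z.im) :
    (!![2 * (z ^ 2).im, -(z ^ 2).im; -(z ^ 2).im, z.im]).PosDef := by
  have hsq : (z ^ 2).im = 2 * z.re * z.im := by rw [sq, mul_im]; ring
  have hre1 : 0 < 1 - z.re := by
    have hpyth := sq_norm_sub_sq_re z
    rw [hz] at hpyth
    nlinarith
  refine Matrix.posDef_fin_two_of (by rw [hsq]; positivity) ?_
  have hdet : 2 * (z ^ 2).im * z.im - (-(z ^ 2).im) ^ 2 = 4 * z.re * (1 - z.re) * z.im ^ 2 := by
    rw [hsq]; ring
  rw [hdet]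
  positivity

theorem zeta5_isPrimitiveRoot : IsPrimitiveRoot zeta5 5 := by
  simpa [zeta5] using Complex.isPrimitiveRoot_exp 5 (by norm_num)

theorem zeta5_eq_exp : zeta5 = exp (↑(2 * Real.pi / 5) * I) := by
  rw [zeta5]; push_cast; ring_nf

theorem zeta5_re_pos : 0 < zeta5.re := by
  rw [zeta5_eq_exp, exp_ofReal_mul_I_re]
  exact Real.cos_pos_of_mem_Ioo ⟨by linarith [Real.pi_pos], by linarith [Real.pi_pos]⟩

theorem zeta5_im_pos : 0 < zeta5.im := by
  rw [zeta5_eq_exp, exp_ofReal_mul_I_im]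
  exact Real.sin_pos_of_pos_of_lt_pi (by positivity) (by linarith [Real.pi_pos])

theorem Zcm_eq : Zcm = !![zeta5 ^ 2 - zeta5 ^ 3, -1 - zeta5 ^ 2; -1 - zeta5 ^ 2, -zeta5 ^ 4] :=
  inv_mul_eq_of_isPrimitiveRoot_five zeta5_isPrimitiveRoot

theorem im_Zcm : (Matrix.of fun i j => (Zcm i j).im)
    = !![2 * (zeta5 ^ 2).im, -(zeta5 ^ 2).im; -(zeta5 ^ 2).im, zeta5.im] := by
  have h5 := zeta5_isPrimitiveRoot.pow_eq_one
  have h3 : (zeta5 ^ 3).im = -(zeta5 ^ 2).im := Complex.im_pow_sub_eq_neg h5 (k := 2) (by norm_num)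
  have h4 : (zeta5 ^ 4).im = -zeta5.im := by
    simpa using Complex.im_pow_sub_eq_neg h5 (k := 1) (by norm_num)
  rw [Zcm_eq]
  ext i j
  fin_cases i <;> fin_cases j <;> simp [h3, h4]
  ring

/-- The CM point `Z₀` lies in the Siegel upper half-space `𝔥₂`. -/
theorem Zcm_mem_siegel : Zcm ∈ SiegelHalfSpace 2 := by
  refine ⟨?_, ?_⟩
  · rw [Zcm_eq]
    ext i j
    fin_cases i <;> fin_cases j <;> rfl
  · rw [im_Zcm]
    exact posDef_of_norm_eq_one_of_re_pos_of_im_pos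
      (zeta5_isPrimitiveRoot.norm'_eq_one (by norm_num)) zeta5_re_pos zeta5_im_pos
end
end

section
/- Let K be a number field and let x be an algebraic integer such that K(x)/K is a Galois extension. Let a, b be nonzero integers with |a| > 2|b|, and let n be a nonzero integer. Then a·x + b ≠ 0 and K(x) = K((a·x + b)ⁿ). -/
/-!
Let `y = a x + b` and let `σ ∈ Gal(K(x)/K)` fix `yⁿ`. Then `σ y = ζ y` for a root of unity `ζ`,
so `a (σ x - ζ x) = b (ζ - 1)`. Every conjugate of the algebraic integer `σ x - ζ x` therefore has
absolute value at most `2 |b| / |a| < 1`, which forces it to vanish; hence `ζ = 1` and `σ x = x`.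
By the Galois correspondence, `x ∈ K(yⁿ)`. The same estimate applied to `a x = -b` gives `y ≠ 0`.
-/

open IntermediateField

namespace NumberField

variable {L : Type*} [Field L] [NumberField L]

theorem eq_zero_of_intCast_mul_eq_intCast_mul {a b : ℤ} (hab : 2 * |b| < |a|) {t s : L}
    (ht : IsIntegral ℤ t) (hs : ∀ φ : L →+* ℂ, ‖φ s‖ ≤ 2) (h : (a : L) * t = b * s) :
    t = 0 := by
  by_contra ht0
  obtain ⟨φ, hφ⟩ := exists_conjugate_one_le_norm (K := L) (α := ⟨t, ht⟩)
    fun h ↦ ht0 (congrArg ((↑) : 𝓞 L → L) h)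
  change 1 ≤ ‖φ t‖ at hφ
  have hab' : 2 * |(b : ℝ)| < |(a : ℝ)| := by exact_mod_cast hab
  refine lt_irrefl |(a : ℝ)| ?_
  calc |(a : ℝ)| ≤ |(a : ℝ)| * ‖φ t‖ := le_mul_of_one_le_right (abs_nonneg _) hφ
    _ = |(b : ℝ)| * ‖φ s‖ := by simpa using congrArg (‖φ ·‖) h
    _ ≤ |(b : ℝ)| * 2 := mul_le_mul_of_nonneg_left (hs φ) (abs_nonneg _)
    _ < |(a : ℝ)| := by linarith

theorem intCast_mul_add_intCast_ne_zero {x : L} (hx : IsIntegral ℤ x) {a b : ℤ}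
    (hab : 2 * |b| < |a|) (hb : b ≠ 0) : (a : L) * x + b ≠ 0 := by
  intro h
  have hx0 : x = 0 :=
    eq_zero_of_intCast_mul_eq_intCast_mul hab hx (s := -1) (by simp) (by linear_combination h)
  simp [hx0, hb] at h

theorem apply_eq_self_of_apply_zpow_eq_self {x : L} (hx : IsIntegral ℤ x) {a b : ℤ}
    (hab : 2 * |b| < |a|) (hb : b ≠ 0) {n : ℤ} (hn : n ≠ 0) (σ : L →+* L)
    (hσ : σ (((a : L) * x + b) ^ n) = ((a : L) * x + b) ^ n) : σ x = x := by
  set y : L := a * x + b with hy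
  have hy0 : y ≠ 0 := intCast_mul_add_intCast_ne_zero hx hab hb
  set ζ := σ y / y
  have hζn : ζ ^ n.natAbs = 1 := by
    have : ζ ^ n = 1 := by rw [div_zpow, ← map_zpow₀, hσ, div_self (zpow_ne_zero n hy0)]
    rcases Int.natAbs_eq n with h | h <;> rw [h] at this
    · rwa [zpow_natCast] at this
    · rwa [zpow_neg, zpow_natCast, inv_eq_one] at this
  have hζ : IsIntegral ℤ ζ := IsIntegral.of_pow (Int.natAbs_pos.2 hn) (hζn ▸ isIntegral_one)
  have hσy : (a : L) * (σ x - ζ * x) = b * (ζ - 1) := by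
    have : σ y = ζ * y := (div_mul_cancel₀ _ hy0).symm
    simp only [hy, map_add, map_mul, map_intCast] at this
    linear_combination this
  have hζ1 : ∀ φ : L →+* ℂ, ‖φ (ζ - 1)‖ ≤ 2 := fun φ ↦ calc
    ‖φ (ζ - 1)‖ = ‖φ ζ - 1‖ := by rw [map_sub, map_one]
    _ ≤ ‖φ ζ‖ + ‖(1 : ℂ)‖ := norm_sub_le _ _
    _ = 2 := by
      rw [Complex.norm_eq_one_of_pow_eq_one (by rw [← map_pow, hζn, map_one])
        (Int.natAbs_ne_zero.2 hn)]
      norm_num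
  have ht : σ x - ζ * x = 0 := eq_zero_of_intCast_mul_eq_intCast_mul hab
    ((hx.map σ.toIntAlgHom).sub (hζ.mul hx)) hζ1 hσy
  rw [ht, mul_zero, eq_comm, mul_eq_zero, sub_eq_zero] at hσy
  rwa [hσy.resolve_left (Int.cast_ne_zero.2 hb), one_mul, sub_eq_zero] at ht

end NumberField

theorem IsGalois.mem_adjoin_simple_of_forall_apply_eq {K L : Type*} [Field K] [Field L]
    [Algebra K L] [FiniteDimensional K L] [IsGalois K L] {x z : L}
    (h : ∀ σ : L ≃ₐ[K] L, σ z = z → σ x = x) : x ∈ K⟮z⟯ := by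
  rw [← IsGalois.fixedField_fixingSubgroup K⟮z⟯]
  rintro ⟨σ, hσ⟩
  exact h σ ((mem_fixingSubgroup_iff _ _).1 hσ z (mem_adjoin_simple_self K z))

theorem adjoin_pow_eq_adjoin_general (K E : Type*) [Field K] [NumberField K] [Field E]
    [Algebra K E] (x : E) (hx : IsIntegral ℤ x)
    (hGal : IsGalois K (IntermediateField.adjoin K {x}))
    (a b : ℤ) (hb : b ≠ 0) (hab : 2 * |b| < |a|)
    (n : ℤ) (hn : n ≠ 0) :
    (a : E) * x + (b : E) ≠ 0 ∧
    IntermediateField.adjoin K {((a : E) * x + (b : E)) ^ n}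
      = IntermediateField.adjoin K {x} := by
  set L := K⟮x⟯
  have : FiniteDimensional K L := adjoin.finiteDimensional hx.tower_top
  have : NumberField L := .of_module_finite K L
  set x' := AdjoinSimple.gen K x
  have hx' : IsIntegral ℤ x' := (isIntegral_algebraMap_iff (algebraMap L E).injective).1 hx
  set y' : L := a * x' + b
  have hy' : ((y' ^ n : L) : E) = ((a : E) * x + b) ^ n :=
    (map_zpow₀ L.val y' n).trans (by simp [y', x'])
  refine ⟨fun h ↦ NumberField.intCast_mul_add_intCast_ne_zero hx' hab hb
    (Subtype.ext (by simpa [y', x'] using h)), le_antisymm ?_ ?_⟩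
  · rw [adjoin_simple_le_iff, ← hy']
    exact (y' ^ n).2
  · have hmem : x' ∈ K⟮y' ^ n⟯ := IsGalois.mem_adjoin_simple_of_forall_apply_eq fun σ hσ ↦
      NumberField.apply_eq_self_of_apply_zpow_eq_self hx' hab hb hn σ hσ
    rw [adjoin_simple_le_iff, ← hy', ← Set.image_singleton, ← coe_val, ← adjoin_map]
    exact ⟨x', hmem, rfl⟩

/-- If `x` is an algebraic integer with `K(x)/K` Galois and `|a| > 2|b|`, then
`K(x) = K((ax+b)ⁿ)` for every nonzero integer `n`. -/
theorem adjoin_pow_eq_adjoin (K E : Type*) [Field K] [NumberField K] [Field E]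
    [Algebra K E] (x : E) (hx : IsIntegral ℤ x)
    (hGal : IsGalois K (IntermediateField.adjoin K {x}))
    (a b : ℤ) (ha : a ≠ 0) (hb : b ≠ 0) (hab : 2 * |b| < |a|)
    (n : ℤ) (hn : n ≠ 0) :
    (a : E) * x + (b : E) ≠ 0 ∧
    IntermediateField.adjoin K {((a : E) * x + (b : E)) ^ n}
      = IntermediateField.adjoin K {x} :=
  adjoin_pow_eq_adjoin_general K E x hx hGal a b hb hab n hn
end

section
/- Let L be an abelian extension of a number field K and suppose L = K(x, y) for algebraic integers x, y ∈ L. Let ℓ = [L : K(x)], let a, b, c, d be nonzero integers with |a| > 2|b| and |c| > 2|d|, and let n, m be nonzero integers. Then c·y + d ≠ 0 and L = K( (a·x + b)ⁿ · (c·y + d)^{−mℓ} · N_{L/K(x)}((c·y + d)^m) ). -/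
/-!
Write `α = a x + b`, `β = c y + d` and `γ` for the proposed generator. As `Gal(L/K)` is abelian,
`N = N_{L/K(x)}` commutes with every `τ ∈ Gal(L/K)`, and `N γ = α ^ (ℓ n)` because the factor
`β ^ (-mℓ) N(β ^ m)` has norm one. So if `τ` fixes `γ`, then `ζ = τ α / α` is a root of unity
with `a τ(x) + b = ζ α`, i.e. `b (ζ - 1) = a (τ(x) - ζ x)`. Comparing `ℚ`-norms, with
`|N_{L/ℚ}(ζ - 1)| ≤ 2 ^ [L : ℚ]` and `2|b| < |a|`, the algebraic integer `τ(x) - ζ x` has norm of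
absolute value `< 1`, hence vanishes, and `ζ = 1`. Thus `τ` fixes `x`, hence `K(x)` and `N(β ^ m)`,
so `τ γ = γ` gives `(τ β) ^ (mℓ) = β ^ (mℓ)`, and `τ` fixes `y` by the same argument. Hence `τ = 1`
and `K(γ) = L` by Galois theory.
-/

open IntermediateField Module

section NumberField

variable {L : Type*} [Field L] [NumberField L]

lemma norm_intCast_mul (t : ℤ) (w : L) :
    Algebra.norm ℚ ((t : L) * w) = (t : ℚ) ^ finrank ℚ L * Algebra.norm ℚ w := by
  rw [map_mul, ← map_intCast (algebraMap ℚ L), Algebra.norm_algebraMap]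

lemma eq_zero_of_isIntegral_of_abs_norm_lt_one {e : L} (he : IsIntegral ℤ e)
    (h : |Algebra.norm ℚ e| < 1) : e = 0 := by
  obtain ⟨z, hz⟩ := IsIntegrallyClosed.isIntegral_iff.mp (Algebra.isIntegral_norm ℚ he)
  rw [← hz, eq_intCast, ← Int.cast_abs, ← Int.cast_one, Int.cast_lt, Int.abs_lt_one_iff] at h
  rwa [h, map_zero, eq_comm, Algebra.norm_eq_zero_iff] at hz

lemma intCast_mul_add_ne_zero {y : L} (hy : IsIntegral ℤ y) {c d : ℤ} (hd : d ≠ 0)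
    (hdc : |d| < |c|) : (c : L) * y + d ≠ 0 := by
  intro h
  have hc : (c : ℚ) ≠ 0 := by
    rw [Int.cast_ne_zero, ← abs_pos]; exact (abs_pos.mpr hd).trans hdc
  have hy_eq : y = algebraMap ℚ L (-d / c) := by
    rw [map_div₀, map_neg, map_intCast, map_intCast]
    field_simp [(Int.cast_ne_zero.mp hc : c ≠ 0)]
    linear_combination h
  have hy0 : y = 0 := by
    refine eq_zero_of_isIntegral_of_abs_norm_lt_one hy ?_
    rw [hy_eq, Algebra.norm_algebraMap, abs_pow]
    refine pow_lt_one₀ (abs_nonneg _) ?_ finrank_pos.ne'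
    rw [abs_div, abs_neg, div_lt_one (abs_pos.mpr hc)]
    exact_mod_cast hdc
  rw [hy0, mul_zero, zero_add, Int.cast_eq_zero] at h
  exact hd h

lemma abs_norm_sub_one_le_of_pow_eq_one {ζ : L} {k : ℕ} (hk : k ≠ 0) (hζ : ζ ^ k = 1) :
    |Algebra.norm ℚ (ζ - 1)| ≤ 2 ^ finrank ℚ L := by
  have hemb : ‖algebraMap ℚ ℂ (Algebra.norm ℚ (ζ - 1))‖ ≤ 2 ^ finrank ℚ L := by
    rw [Algebra.norm_eq_prod_embeddings ℚ ℂ, norm_prod, ← AlgHom.card ℚ L ℂ,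
      ← Finset.card_univ, ← Finset.prod_const]
    refine Finset.prod_le_prod (fun _ _ => norm_nonneg _) fun σ _ => ?_
    have hσζ : ‖σ ζ‖ = 1 := Complex.norm_eq_one_of_pow_eq_one (by rw [← map_pow, hζ, map_one]) hk
    calc ‖σ (ζ - 1)‖ = ‖σ ζ - 1‖ := by rw [map_sub, map_one]
      _ ≤ ‖σ ζ‖ + ‖(1 : ℂ)‖ := norm_sub_le _ _
      _ = 2 := by rw [hσζ, norm_one]; norm_num
  rw [eq_ratCast, Complex.norm_ratCast] at hemb
  exact_mod_cast hemb

lemma eq_one_of_intCast_mul_add_eq_mul {x x' ζ : L} (hx : IsIntegral ℤ x)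
    (hx' : IsIntegral ℤ x') {k : ℕ} (hk : k ≠ 0) (hζ : ζ ^ k = 1) {a b : ℤ} (hb : b ≠ 0)
    (hab : 2 * |b| < |a|) (h : (a : L) * x' + b = ζ * (a * x + b)) : ζ = 1 := by
  set D := finrank ℚ L
  have hζint : IsIntegral ℤ ζ := .of_pow (Nat.pos_of_ne_zero hk) (hζ ▸ isIntegral_one)
  set e := x' - ζ * x
  have he : IsIntegral ℤ e := hx'.sub (hζint.mul hx)
  have key : (b : L) * (ζ - 1) = a * e := by linear_combination -h
  have hnorm : (b : ℚ) ^ D * Algebra.norm ℚ (ζ - 1) = (a : ℚ) ^ D * Algebra.norm ℚ e := by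
    simpa only [norm_intCast_mul] using congrArg (Algebra.norm ℚ) key
  have hab' : 2 * |(b : ℚ)| < |(a : ℚ)| := by exact_mod_cast hab
  have he0 : e = 0 := by
    refine eq_zero_of_isIntegral_of_abs_norm_lt_one he (lt_of_mul_lt_mul_left ?_
      (pow_nonneg (abs_nonneg (a : ℚ)) D))
    calc |(a : ℚ)| ^ D * |Algebra.norm ℚ e| = |(b : ℚ)| ^ D * |Algebra.norm ℚ (ζ - 1)| := by
          rw [← abs_pow, ← abs_pow, ← abs_mul, ← abs_mul, hnorm]
      _ ≤ |(b : ℚ)| ^ D * 2 ^ D := by gcongr; exact abs_norm_sub_one_le_of_pow_eq_one hk hζ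
      _ = (2 * |(b : ℚ)|) ^ D := by ring
      _ < |(a : ℚ)| ^ D * 1 := by
          rw [mul_one]; exact pow_lt_pow_left₀ hab' (by positivity) finrank_pos.ne'
  rw [he0, mul_zero] at key
  exact sub_eq_zero.mp ((mul_eq_zero.mp key).resolve_left (Int.cast_ne_zero.mpr hb))

lemma map_eq_self_of_map_zpow_eq {F : Type*} [FunLike F L L] [RingHomClass F L L] (σ : F)
    {x : L} (hx : IsIntegral ℤ x) {a b : ℤ} (hb : b ≠ 0) (hab : 2 * |b| < |a|) {k : ℤ}
    (hk : k ≠ 0) (h : σ (a * x + b) ^ k = ((a : L) * x + b) ^ k) : σ x = x := by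
  set α := (a : L) * x + b
  have hba : |b| < |a| := by linarith [abs_nonneg b]
  have hα : α ≠ 0 := intCast_mul_add_ne_zero hx hb hba
  have hσα : σ α = a * σ x + b := by simp only [α, map_add, map_mul, map_intCast]
  have hζ : (σ α / α) ^ k = 1 := by rw [div_zpow, h, div_self (zpow_ne_zero k hα)]
  have hζ' : (σ α / α) ^ k.natAbs = 1 := by
    rcases Int.natAbs_eq k with hk' | hk'
    · rwa [hk', zpow_natCast] at hζ
    · rwa [hk', zpow_neg, zpow_natCast, inv_eq_one] at hζ
  have hσx : IsIntegral ℤ (σ x) := hx.map (σ : L →+* L).toIntAlgHom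
  have hζ1 := eq_one_of_intCast_mul_add_eq_mul hx hσx (Int.natAbs_ne_zero.mpr hk) hζ' hb hab
    (by rw [← hσα, div_mul_cancel₀ _ hα])
  rw [div_eq_one_iff_eq hα, hσα] at hζ1
  have ha : (a : L) ≠ 0 := Int.cast_ne_zero.mpr (abs_pos.mp ((abs_nonneg b).trans_lt hba))
  exact mul_left_cancel₀ ha (add_right_cancel hζ1)

end NumberField

section Galois

variable {K L : Type*} [Field K] [Field L] [Algebra K L]

lemma map_eq_self_of_mem_adjoin (τ : Gal(L/K)) {s : Set L} (hs : ∀ z ∈ s, τ z = z) {z : L}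
    (hz : z ∈ adjoin K s) : τ z = z := by
  have hle : adjoin K s ≤ fixedField (Subgroup.zpowers τ) :=
    adjoin_le_iff.mpr fun w hw ⟨_, hg⟩ =>
      Subgroup.zpowers_le.mpr (show τ ∈ MulAction.stabilizer _ w from hs w hw) hg
  exact hle hz ⟨τ, Subgroup.mem_zpowers τ⟩

lemma adjoin_simple_eq_top_of_forall_fixed [FiniteDimensional K L] [IsGalois K L] {γ : L}
    (h : ∀ τ : Gal(L/K), τ γ = γ → τ = 1) : K⟮γ⟯ = ⊤ := by
  have hbot : K⟮γ⟯.fixingSubgroup = ⊥ := (Subgroup.eq_bot_iff_forall _).mpr fun τ hτ =>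
    h τ ((mem_fixingSubgroup_iff _ τ).mp hτ γ (mem_adjoin_simple_self K γ))
  rw [← IsGalois.fixedField_fixingSubgroup K⟮γ⟯, hbot, fixedField_bot]

variable {F : IntermediateField K L}

lemma algebraMap_norm_of_mem {z : L} (hz : z ∈ F) :
    algebraMap F L (Algebra.norm F z) = z ^ finrank F L := by
  simpa using congrArg (algebraMap F L) (Algebra.norm_algebraMap (S := L) (⟨z, hz⟩ : F))

lemma algebraMap_norm_zpow_mul_algebraMap_norm [FiniteDimensional K L] {β : L} (hβ : β ≠ 0)
    (m : ℤ) :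
    algebraMap F L (Algebra.norm F
      (β ^ (-(m * finrank F L)) * algebraMap F L (Algebra.norm F (β ^ m)))) = 1 := by
  have hNβ : algebraMap F L (Algebra.norm F β) ≠ 0 :=
    (map_ne_zero _).mpr (Algebra.norm_ne_zero_iff.mpr hβ)
  simp only [map_mul, Algebra.norm_zpow, map_zpow₀, Algebra.norm_algebraMap, map_pow]
  rw [← zpow_natCast, ← zpow_mul, ← zpow_add₀ hNβ, mul_comm m, neg_add_cancel, zpow_zero]

lemma algebraMap_norm_map_of_commute [FiniteDimensional K L] [IsGalois K L] (τ : Gal(L/K))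
    (hτ : ∀ σ : Gal(L/F), σ.restrictScalars K * τ = τ * σ.restrictScalars K) (z : L) :
    algebraMap F L (Algebra.norm F (τ z)) = τ (algebraMap F L (Algebra.norm F z)) := by
  rw [Algebra.norm_eq_prod_automorphisms, Algebra.norm_eq_prod_automorphisms, map_prod]
  exact Finset.prod_congr rfl fun σ _ => congrArg (· z) (congrArg DFunLike.coe (hτ σ))

end Galois

theorem primitive_generator_norm_general (K L : Type*) [Field K] [NumberField K] [Field L]
    [Algebra K L] [FiniteDimensional K L] [IsGalois K L]
    (habelian : ∀ σ τ : L ≃ₐ[K] L, σ * τ = τ * σ)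
    (x y : L) (hxint : IsIntegral ℤ x) (hyint : IsIntegral ℤ y)
    (hxy : IntermediateField.adjoin K {x, y} = ⊤)
    (F : IntermediateField K L) (hF : F = IntermediateField.adjoin K {x})
    (ℓ : ℕ) (hℓ : ℓ = Module.finrank F L)
    (a b c d : ℤ) (hb : b ≠ 0) (hd : d ≠ 0)
    (hab : 2 * |b| < |a|) (hcd : 2 * |d| < |c|)
    (n m : ℤ) (hn : n ≠ 0) (hm : m ≠ 0) :
    (c : L) * y + (d : L) ≠ 0 ∧
    IntermediateField.adjoin K
        {((a : L) * x + (b : L)) ^ n * ((c : L) * y + (d : L)) ^ (-(m * (ℓ : ℤ))) *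
          algebraMap F L (Algebra.norm F (((c : L) * y + (d : L)) ^ m))}
      = ⊤ := by
  have : NumberField L := .of_module_finite K L
  set α : L := a * x + b
  set β : L := c * y + d
  set Nβm := algebraMap F L (Algebra.norm F (β ^ m))
  have hβ : β ≠ 0 := intCast_mul_add_ne_zero hyint hd (by linarith [abs_nonneg d])
  have hα : α ≠ 0 := intCast_mul_add_ne_zero hxint hb (by linarith [abs_nonneg b])
  have hNβm : Nβm ≠ 0 := (map_ne_zero _).mpr (Algebra.norm_ne_zero_iff.mpr (zpow_ne_zero m hβ))
  have hℓ0 : (ℓ : ℤ) ≠ 0 := by rw [hℓ]; exact_mod_cast finrank_pos.ne'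
  have hαF : α ∈ F := by
    subst hF
    exact add_mem (mul_mem (intCast_mem _ a) (mem_adjoin_simple_self K x)) (intCast_mem _ b)
  have hNγ : algebraMap F L (Algebra.norm F (α ^ n * β ^ (-(m * ℓ)) * Nβm)) = α ^ (ℓ * n) := by
    rw [mul_assoc, map_mul, map_mul, hℓ, algebraMap_norm_zpow_mul_algebraMap_norm hβ, mul_one,
      Algebra.norm_zpow, map_zpow₀, algebraMap_norm_of_mem hαF, ← zpow_natCast, ← zpow_mul]
  refine ⟨hβ, adjoin_simple_eq_top_of_forall_fixed fun τ hτ => ?_⟩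
  have hτx : τ x = x := by
    refine map_eq_self_of_map_zpow_eq τ hxint hb hab (mul_ne_zero hℓ0 hn) ?_
    rw [← map_zpow₀, ← hNγ, ← algebraMap_norm_map_of_commute τ (fun σ => habelian _ τ), hτ]
  have hτα : τ α = α := by simp only [α, map_add, map_mul, map_intCast, hτx]
  have hNβmF : Nβm ∈ K⟮x⟯ := hF ▸ SetLike.coe_mem _
  have hτNβm : τ Nβm = Nβm := map_eq_self_of_mem_adjoin τ (s := {x}) (by simpa using hτx) hNβmF
  have hτy : τ y = y := by
    refine map_eq_self_of_map_zpow_eq τ hyint hd hcd (neg_ne_zero.mpr (mul_ne_zero hm hℓ0)) ?_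
    rw [map_mul, map_mul, map_zpow₀, map_zpow₀, hτα, hτNβm] at hτ
    exact mul_left_cancel₀ (zpow_ne_zero n hα) (mul_right_cancel₀ hNβm hτ)
  exact AlgEquiv.ext fun z => map_eq_self_of_mem_adjoin τ (by simp [hτx, hτy]) (hxy ▸ mem_top)

/-- Combining two generators of an abelian extension via a norm:
`L = K((ax+b)ⁿ (cy+d)^{−mℓ} N_{L/K(x)}((cy+d)^m))`. -/
theorem primitive_generator_norm (K L : Type*) [Field K] [NumberField K] [Field L]
    [Algebra K L] [FiniteDimensional K L] [IsGalois K L]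
    (habelian : ∀ σ τ : L ≃ₐ[K] L, σ * τ = τ * σ)
    (x y : L) (hxint : IsIntegral ℤ x) (hyint : IsIntegral ℤ y)
    (hxy : IntermediateField.adjoin K {x, y} = ⊤)
    (F : IntermediateField K L) (hF : F = IntermediateField.adjoin K {x})
    (ℓ : ℕ) (hℓ : ℓ = Module.finrank F L)
    (a b c d : ℤ) (ha : a ≠ 0) (hb : b ≠ 0) (hc : c ≠ 0) (hd : d ≠ 0)
    (hab : 2 * |b| < |a|) (hcd : 2 * |d| < |c|)
    (n m : ℤ) (hn : n ≠ 0) (hm : m ≠ 0) :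
    (c : L) * y + (d : L) ≠ 0 ∧
    IntermediateField.adjoin K
        {((a : L) * x + (b : L)) ^ n * ((c : L) * y + (d : L)) ^ (-(m * (ℓ : ℤ))) *
          algebraMap F L (Algebra.norm F (((c : L) * y + (d : L)) ^ m))}
      = ⊤ :=
  primitive_generator_norm_general K L habelian x y hxint hyint hxy F hF ℓ hℓ a b c d hb hd hab hcd
    n m hn hm
end
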